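/- arXiv:2212.05049 — 5 statements merged into one kernel-verified Lean document; each statement's English description precedes it below -/
import Mathlib

section
/- Let K ⊂ ℂⁿ be a convex body (compact convex set with nonempty interior). Then K is complex symmetric (i.e., there exists x₀ ∈ ℂⁿ such that ξ·(K − x₀) = K − x₀ for every unit complex number ξ) if and only if for every unit complex number ξ, the set ξ·K is a translate of K. -/
/-!
If `ξ • K = K + v`, comparing centroids gives `v = ξ • c - c` for the centroid `c` of `K`, and
then `ξ • (K - c) = ξ • K - ξ • c = K - c`. Centroids transform correctly because translations and
multiplication by a unit complex number preserve Lebesgue measure.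
-/

open Pointwise MeasureTheory

theorem Set.smul_image_sub_eq_iff {R M : Type*} [Monoid R] [AddCommGroup M]
    [DistribMulAction R M] (a : R) (s : Set M) (c : M) :
    a • ((· - c) '' s) = (· - c) '' s ↔ a • s = (· + (a • c - c)) '' s := by
  have hlhs : a • ((· - c) '' s) = (· - a • c) '' (a • s) := by
    simp only [← Set.image_smul, Set.image_image, smul_sub]
  have hrhs : (· - c) '' s = (· - a • c) '' ((· + (a • c - c)) '' s) := by
    rw [Set.image_image]
    congr 1
    funext x
    abel
  rw [hlhs, hrhs, (Set.image_injective.mpr (sub_left_injective (b := a • c))).eq_iff]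

section Average

variable {E F : Type*} [NormedAddCommGroup E] [NormedSpace ℝ E] [MeasurableSpace E]
  [NormedAddCommGroup F] [NormedSpace ℝ F] [MeasurableSpace F]

theorem MeasureTheory.MeasurePreserving.setAverage_id_image [BorelSpace E] [BorelSpace F]
    {μ : Measure E} {ν : Measure F} (e : E ≃L[ℝ] F) (he : MeasurePreserving e μ ν)
    (s : Set E) : ⨍ y in e '' s, y ∂ν = e (⨍ x in s, x ∂μ) := by
  have hemb : MeasurableEmbedding e := e.toHomeomorph.measurableEmbedding
  have hmeas : ν (e '' s) = μ s := by
    rw [← he.measure_preimage_emb hemb, e.injective.preimage_image]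
  rw [setAverage_eq, setAverage_eq, he.setIntegral_image_emb hemb, e.integral_comp_comm,
    map_smul, Measure.real, Measure.real, hmeas]

theorem setAverage_id_image_add_right [CompleteSpace E] [MeasurableAdd E] {μ : Measure E}
    [μ.IsAddRightInvariant] {s : Set E} (hs₀ : μ s ≠ 0) (hs : μ s ≠ ⊤)
    (hint : IntegrableOn (fun x => x) s μ) (v : E) :
    ⨍ y in (· + v) '' s, y ∂μ = (⨍ x in s, x ∂μ) + v := by
  have hmp := measurePreserving_add_right μ v
  have hemb := (MeasurableEquiv.addRight v).measurableEmbedding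
  have hmeas : μ ((· + v) '' s) = μ s := by
    rw [← hmp.measure_preimage_emb hemb, (add_left_injective v).preimage_image]
  have hreal : μ.real s ≠ 0 := ENNReal.toReal_ne_zero.mpr ⟨hs₀, hs⟩
  rw [setAverage_eq, setAverage_eq, hmp.setIntegral_image_emb hemb,
    integral_add hint (integrableOn_const hs), setIntegral_const, Measure.real, hmeas, smul_add,
    smul_smul, ← Measure.real, inv_mul_cancel₀ hreal, one_smul]

end Average

section Complex

variable {E : Type*} [NormedAddCommGroup E] [InnerProductSpace ℝ E] [NormedSpace ℂ E]
  [IsScalarTower ℝ ℂ E] [FiniteDimensional ℝ E] [MeasurableSpace E] [BorelSpace E]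

theorem setAverage_id_smul_of_norm_eq_one {ξ : ℂ} (hξ : ‖ξ‖ = 1) (s : Set E) :
    ⨍ y in ξ • s, y = ξ • ⨍ x in s, x := by
  have hξ₀ : ξ ≠ 0 := by rintro rfl; simp at hξ
  let e : E ≃ₗᵢ[ℝ] E :=
    { DistribMulAction.toLinearEquiv ℝ E (Units.mk0 ξ hξ₀) with
      norm_map' := fun x => by simp [norm_smul, hξ] }
  rw [← Set.image_smul]
  exact e.measurePreserving.setAverage_id_image e.toContinuousLinearEquiv s

theorem smul_image_sub_setAverage_of_smul_eq_image_add {s : Set E} (hs₀ : volume s ≠ 0)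
    (hs : volume s ≠ ⊤) (hint : IntegrableOn (fun x => x) s) {ξ : ℂ} (hξ : ‖ξ‖ = 1) {v : E}
    (hv : ξ • s = (· + v) '' s) :
    ξ • ((· - ⨍ x in s, x) '' s) = (· - ⨍ x in s, x) '' s := by
  have hv' : v = ξ • (⨍ x in s, x) - ⨍ x in s, x := by
    rw [← setAverage_id_smul_of_norm_eq_one hξ, hv, setAverage_id_image_add_right hs₀ hs hint]
    abel
  rwa [Set.smul_image_sub_eq_iff, ← hv']

end Complex

theorem complex_symmetric_iff_smul_translate_general (n : ℕ)
    (K : Set (EuclideanSpace ℂ (Fin n)))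
    (hKc : IsCompact K) (hKint : (interior K).Nonempty) :
    (∃ x₀ : EuclideanSpace ℂ (Fin n), ∀ ξ : ℂ, ‖ξ‖ = 1 →
        ξ • ((fun x => x - x₀) '' K) = (fun x => x - x₀) '' K) ↔
    (∀ ξ : ℂ, ‖ξ‖ = 1 → ∃ v : EuclideanSpace ℂ (Fin n),
        ξ • K = (fun x => x + v) '' K) := by
  constructor
  · rintro ⟨x₀, hx₀⟩ ξ hξ
    exact ⟨ξ • x₀ - x₀, (Set.smul_image_sub_eq_iff ξ K x₀).mp (hx₀ ξ hξ)⟩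
  · intro h
    refine ⟨⨍ x in K, x, fun ξ hξ => ?_⟩
    obtain ⟨v, hv⟩ := h ξ hξ
    exact smul_image_sub_setAverage_of_smul_eq_image_add
      (Measure.measure_pos_of_nonempty_interior _ hKint).ne' hKc.measure_lt_top.ne
      (continuousOn_id.integrableOn_compact hKc) hξ hv

/-- A convex body `K ⊂ ℂⁿ` is complex symmetric (there is `x₀` with
`ξ • (K - x₀) = K - x₀` for all unit `ξ`) iff for every unit complex number `ξ`,
`ξ • K` is a translate of `K`. -/
theorem complex_symmetric_iff_smul_translate (n : ℕ)
    (K : Set (EuclideanSpace ℂ (Fin n)))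
    (hKc : IsCompact K) (hKconv : Convex ℝ K) (hKint : (interior K).Nonempty) :
    (∃ x₀ : EuclideanSpace ℂ (Fin n), ∀ ξ : ℂ, ‖ξ‖ = 1 →
        ξ • ((fun x => x - x₀) '' K) = (fun x => x - x₀) '' K) ↔
    (∀ ξ : ℂ, ‖ξ‖ = 1 → ∃ v : EuclideanSpace ℂ (Fin n),
        ξ • K = (fun x => x + v) '' K) :=
  complex_symmetric_iff_smul_translate_general n K hKc hKint
end

section
/- A convex body K ⊂ ℂⁿ is complex symmetric if and only if some translate K' of K has the property that for every complex 1-dimensional linear subspace L of ℂⁿ, the orthogonal projection of K' onto L is a closed disk centered at the origin. -/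
/-!
Call `S` circled if `ξ • S ⊆ S` for all unit scalars `ξ`. Circled sets have circled linear images,
and a convex circled set is balanced, hence in a line it is a disk centered at the origin (of radius
the largest norm in a compact set). Conversely, if some `ξ • y` with `y ∈ S` lay outside the closed
convex set `S`, Hahn–Banach would separate it from `S` by a complex functional `⟪u, ·⟫`. This
functional factors through the projection onto `𝕜 ∙ u`, which maps `S` onto a disk, so that disk
contains the projection of `ξ • y`, contradicting the separation.
-/

open Pointwise Set Metric Module

def Circled (𝕜 : Type*) {E : Type*} [SeminormedRing 𝕜] [SMul 𝕜 E] (s : Set E) : Prop :=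
  ∀ a : 𝕜, ‖a‖ = 1 → a • s ⊆ s

section Circled

variable {𝕜 E F G : Type*}

theorem Balanced.circled [SeminormedRing 𝕜] [SMul 𝕜 E] {s : Set E} (hs : Balanced 𝕜 s) :
    Circled 𝕜 s :=
  fun a ha => hs a ha.le

theorem Circled.smul_eq [NormedDivisionRing 𝕜] [MulAction 𝕜 E] {s : Set E} (hs : Circled 𝕜 s)
    {a : 𝕜} (ha : ‖a‖ = 1) : a • s = s := by
  have ha₀ : a ≠ 0 := norm_ne_zero_iff.mp (by simp [ha])
  refine (hs a ha).antisymm ?_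
  calc s = a • a⁻¹ • s := (smul_inv_smul₀ ha₀ s).symm
    _ ⊆ a • s := smul_set_mono (hs a⁻¹ (by simp [ha]))

theorem Circled.image [SeminormedRing 𝕜] [SMul 𝕜 E] [SMul 𝕜 F] [FunLike G E F]
    [MulActionHomClass G 𝕜 E F] {s : Set E} (hs : Circled 𝕜 s) (f : G) : Circled 𝕜 (f '' s) := by
  intro a ha
  rw [← image_smul_set]
  exact image_mono (hs a ha)

end Circled

section RCLike

variable {𝕜 E : Type*} [RCLike 𝕜] [AddCommGroup E] [Module 𝕜 E] [Module ℝ E]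

theorem Circled.zero_mem_of_convex {s : Set E} (hs : Circled 𝕜 s) (hconv : Convex ℝ s)
    (hne : s.Nonempty) : (0 : E) ∈ s := by
  obtain ⟨x, hx⟩ := hne
  have hneg : -x ∈ s := by simpa using hs (-1) (by simp) (smul_mem_smul_set hx)
  simpa using hconv.midpoint_mem hx hneg

theorem Circled.balanced_of_convex [IsScalarTower ℝ 𝕜 E] {s : Set E} (hs : Circled 𝕜 s)
    (hconv : Convex ℝ s) : Balanced 𝕜 s := by
  refine balanced_iff_smul_mem.2 fun c hc x hx => ?_
  have h0 : (0 : E) ∈ s := hs.zero_mem_of_convex hconv ⟨x, hx⟩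
  rcases eq_or_ne c 0 with rfl | hc₀
  · simpa using h0
  have hξ : ‖(‖c‖ : 𝕜)⁻¹ * c‖ = 1 := by simp [norm_mul, hc₀]
  have hξx : ((‖c‖ : 𝕜)⁻¹ * c) • x ∈ s := hs _ hξ (smul_mem_smul_set hx)
  have key : c • x = ‖c‖ • (((‖c‖ : 𝕜)⁻¹ * c) • x) + (1 - ‖c‖) • (0 : E) := by
    rw [smul_zero, add_zero, RCLike.real_smul_eq_coe_smul (K := 𝕜), smul_smul, ← mul_assoc,
      mul_inv_cancel₀ (by simpa using hc₀), one_mul]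
  rw [key]
  exact hconv hξx h0 (norm_nonneg c) (by linarith) (by ring)

end RCLike

section FinrankOne

variable {𝕜 E : Type*} [NormedField 𝕜] [NormedAddCommGroup E] [NormedSpace 𝕜 E]

theorem Balanced.closedBall_subset_of_finrank_eq_one (hE : finrank 𝕜 E = 1) {s : Set E}
    (hs : Balanced 𝕜 s) {m : E} (hm : m ∈ s) : closedBall (0 : E) ‖m‖ ⊆ s := by
  intro z hz
  rw [mem_closedBall_zero_iff] at hz
  obtain ⟨c, hc, rfl⟩ : ∃ c : 𝕜, ‖c‖ ≤ 1 ∧ c • m = z := by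
    rcases eq_or_ne m 0 with rfl | hm₀
    · exact ⟨0, by simp, by simpa using (norm_le_zero_iff.1 (by simpa using hz)).symm⟩
    obtain ⟨c, rfl⟩ := (finrank_eq_one_iff_of_nonzero' m hm₀).1 hE z
    refine ⟨c, ?_, rfl⟩
    rw [norm_smul] at hz
    exact le_of_mul_le_mul_right (by simpa using hz) (norm_pos_iff.2 hm₀)
  exact hs.smul_mem hc hm

theorem Balanced.eq_closedBall_of_finrank_eq_one (hE : finrank 𝕜 E = 1) {s : Set E}
    (hs : Balanced 𝕜 s) (hsc : IsCompact s) (hne : s.Nonempty) :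
    ∃ r, 0 ≤ r ∧ s = closedBall 0 r := by
  obtain ⟨m, hm, hmax⟩ := hsc.exists_isMaxOn hne continuous_norm.continuousOn
  refine ⟨‖m‖, norm_nonneg m, ?_⟩
  refine Subset.antisymm (fun z hz => ?_) (hs.closedBall_subset_of_finrank_eq_one hE hm)
  simpa using hmax hz

end FinrankOne

section Separation

variable {𝕜 E : Type*} [RCLike 𝕜] [AddCommGroup E] [TopologicalSpace E] [IsTopologicalAddGroup E]
  [Module 𝕜 E] [ContinuousSMul 𝕜 E] [Module ℝ E] [IsScalarTower ℝ 𝕜 E] [LocallyConvexSpace ℝ E]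

theorem Convex.subset_of_forall_image_subset {s t : Set E} (ht : Convex ℝ t) (htc : IsClosed t)
    (h : ∀ f : StrongDual 𝕜 E, f '' s ⊆ f '' t) : s ⊆ t := by
  intro x hx
  by_contra hxt
  obtain ⟨f, u, hft, hfx⟩ := RCLike.geometric_hahn_banach_closed_point (𝕜 := 𝕜) ht htc hxt
  obtain ⟨y, hy, hfy⟩ := h f (mem_image_of_mem f hx)
  exact (hft y hy).not_ge (hfy ▸ hfx.le)

theorem Convex.circled_of_forall_circled_image {s : Set E} (hs : Convex ℝ s) (hsc : IsClosed s)
    (h : ∀ f : StrongDual 𝕜 E, f ≠ 0 → Circled 𝕜 (f '' s)) : Circled 𝕜 s := by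
  intro a ha
  refine hs.subset_of_forall_image_subset (𝕜 := 𝕜) hsc fun f => ?_
  rcases eq_or_ne f 0 with rfl | hf
  · rintro _ ⟨_, ⟨x, hx, rfl⟩, rfl⟩
    exact ⟨x, hx, by simp⟩
  rw [image_smul_set]
  exact h f hf a ha

end Separation

section InnerProduct

variable {𝕜 E : Type*} [RCLike 𝕜] [NormedAddCommGroup E] [InnerProductSpace 𝕜 E] [CompleteSpace E]

theorem StrongDual.apply_starProjection_span_toDual_symm (f : StrongDual 𝕜 E) (x : E) :
    f ((𝕜 ∙ (InnerProductSpace.toDual 𝕜 E).symm f).starProjection x) = f x := by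
  set u := (InnerProductSpace.toDual 𝕜 E).symm f
  have hu : (𝕜 ∙ u).starProjection u = u :=
    Submodule.starProjection_eq_self_iff.2 (Submodule.mem_span_singleton_self u)
  simp only [← InnerProductSpace.toDual_symm_apply, u]
  rw [← Submodule.inner_starProjection_left_eq_right, hu]

theorem Convex.circled_of_forall_circled_orthogonalProjectionOnto [NormedSpace ℝ E]
    [IsScalarTower ℝ 𝕜 E] {s : Set E} (hs : Convex ℝ s) (hsc : IsClosed s)
    (h : ∀ u : E, u ≠ 0 → Circled 𝕜 ((𝕜 ∙ u).orthogonalProjectionOnto '' s)) :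
    Circled 𝕜 s := by
  refine hs.circled_of_forall_circled_image hsc fun f hf => ?_
  set u := (InnerProductSpace.toDual 𝕜 E).symm f
  set L := 𝕜 ∙ u
  have hfs : f '' s = (f ∘L L.subtypeL) '' (L.orthogonalProjectionOnto '' s) := by
    rw [image_image]
    exact image_congr fun x _ => (f.apply_starProjection_span_toDual_symm x).symm
  rw [hfs]
  exact (h u (by simpa [u] using hf)).image _

end InnerProduct

section FiniteDimensional

variable {𝕜 E : Type*} [RCLike 𝕜] [NormedAddCommGroup E] [InnerProductSpace 𝕜 E]
  [FiniteDimensional 𝕜 E] [NormedSpace ℝ E] [IsScalarTower ℝ 𝕜 E]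

theorem circled_iff_forall_orthogonalProjectionOnto_eq_closedBall {s : Set E} (hs : Convex ℝ s)
    (hsc : IsCompact s) (hne : s.Nonempty) :
    Circled 𝕜 s ↔ ∀ L : Submodule 𝕜 E, finrank 𝕜 L = 1 →
      ∃ r : ℝ, 0 ≤ r ∧ L.orthogonalProjectionOnto '' s = closedBall 0 r := by
  have : CompleteSpace E := FiniteDimensional.complete 𝕜 E
  refine ⟨fun hcirc L hL => ?_, fun h => ?_⟩
  · set P := L.orthogonalProjectionOnto
    have hPconv : Convex ℝ (P '' s) := hs.linear_image (P.restrictScalars ℝ).toLinearMap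
    exact ((hcirc.image P).balanced_of_convex hPconv).eq_closedBall_of_finrank_eq_one hL
      (hsc.image P.continuous) (hne.image P)
  · refine hs.circled_of_forall_circled_orthogonalProjectionOnto hsc.isClosed fun u hu => ?_
    obtain ⟨r, -, hr⟩ := h (𝕜 ∙ u) (finrank_span_singleton hu)
    rw [hr]
    exact balanced_closedBall_zero.circled

end FiniteDimensional

/-- A convex body `K ⊂ ℂⁿ` is complex symmetric iff some translate `K'` of `K`
projects orthogonally onto every complex line through the origin as a closed
disk centered at the origin. -/
theorem complex_symmetric_iff_projections_disks (n : ℕ)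
    (K : Set (EuclideanSpace ℂ (Fin n)))
    (hKc : IsCompact K) (hKconv : Convex ℝ K) (hKint : (interior K).Nonempty) :
    (∃ x₀ : EuclideanSpace ℂ (Fin n), ∀ ξ : ℂ, ‖ξ‖ = 1 →
        ξ • ((fun x => x - x₀) '' K) = (fun x => x - x₀) '' K) ↔
    (∃ v : EuclideanSpace ℂ (Fin n),
      ∀ L : Submodule ℂ (EuclideanSpace ℂ (Fin n)), Module.finrank ℂ L = 1 →
        ∃ r : ℝ, 0 ≤ r ∧
          (Submodule.orthogonalProjectionOnto L) '' ((fun x => x + v) '' K) =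
            Metric.closedBall (0 : L) r) := by
  have htranslate (v : EuclideanSpace ℂ (Fin n)) :=
    circled_iff_forall_orthogonalProjectionOnto_eq_closedBall (𝕜 := ℂ) (s := (· + v) '' K)
      (by simpa only [add_comm] using hKconv.translate v) (hKc.image (continuous_add_const v))
      ((hKint.mono interior_subset).image _)
  constructor
  · rintro ⟨x₀, hx₀⟩
    refine ⟨-x₀, (htranslate (-x₀)).1 fun ξ hξ => ?_⟩
    simpa only [← sub_eq_add_neg] using (hx₀ ξ hξ).subset
  · rintro ⟨v, hv⟩
    refine ⟨-v, fun ξ hξ => ?_⟩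
    simpa only [sub_neg_eq_add] using ((htranslate v).2 hv).smul_eq hξ
end

section
/- Let K ⊂ ℂ² be a convex body contained in the closed unit ball B of ℂ², and suppose that for every complex line L (1-dimensional complex affine subspace), the intersection L ∩ K is either empty, a point, or a disk (the image of a closed round disk under a complex affine map ℂ → L). If x, y are two distinct points of K lying on the unit sphere S³ = ∂B, and L is the complex line through x and y, then L ∩ K = L ∩ B, and in particular L ∩ S³ ⊂ K. -/
/-- A complex line in a complex vector space. -/
def IsComplexLine {V : Type*} [AddCommGroup V] [Module ℂ V] (L : Set V) : Prop :=
  ∃ a b : V, b ≠ 0 ∧ L = {x | ∃ t : ℂ, x = a + t • b}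

/-- A disk: image of a closed round disk under a complex affine map `ℂ → V`. -/
def IsComplexDisk {V : Type*} [AddCommGroup V] [Module ℂ V] (S : Set V) : Prop :=
  ∃ (a b : V) (r : ℝ), 0 < r ∧ b ≠ 0 ∧
    S = (fun t : ℂ => a + t • b) '' Metric.closedBall (0 : ℂ) r

/-!
Parametrize the line `L` as `t ↦ a + t • b` with `a ⟂ b`. By Pythagoras `‖a + t • b‖` increases
with `‖t‖`, so `L ∩ B` is the image of a disk `|t| ≤ R`, and `x`, `y` are images of two distinct
points of the circle `|t| = R`. The section `L ∩ K` is a disk (it has two points), hence the image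
of some disk `D ⊆ {|t| ≤ R}` which contains those two boundary points. By strict convexity of `ℂ` a
disk inside a disk touches its boundary in at most one point unless the two disks coincide.
-/

open Metric Set Function

section TouchingBalls

variable {E : Type*} [NormedAddCommGroup E] [NormedSpace ℝ E]

lemma norm_add_le_of_closedBall_subset {c : E} {ρ R : ℝ} (hc : c ≠ 0) (hρ : 0 ≤ ρ)
    (hsub : closedBall c ρ ⊆ closedBall 0 R) : ‖c‖ + ρ ≤ R := by
  have hcn : 0 < ‖c‖ := norm_pos_iff.mpr hc
  have hfar : ‖(1 + ρ / ‖c‖) • c‖ = ‖c‖ + ρ := by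
    rw [norm_smul, Real.norm_of_nonneg (by positivity), add_mul, one_mul,
      div_mul_cancel₀ _ hcn.ne']
  have hmem : (1 + ρ / ‖c‖) • c ∈ closedBall c ρ := by
    rw [mem_closedBall, dist_eq_norm, add_smul, one_smul, add_sub_cancel_left, norm_smul,
      Real.norm_of_nonneg (by positivity), div_mul_cancel₀ _ hcn.ne']
  simpa [hfar] using hsub hmem

variable [StrictConvexSpace ℝ E]

lemma sameRay_of_closedBall_subset {c x : E} {ρ R : ℝ} (hc : c ≠ 0)
    (hsub : closedBall c ρ ⊆ closedBall 0 R) (hx : x ∈ closedBall c ρ) (hxR : ‖x‖ = R) :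
    SameRay ℝ (x - c) c ∧ ‖x - c‖ = ρ := by
  have hρ := norm_add_le_of_closedBall_subset hc (nonneg_of_mem_closedBall hx) hsub
  rw [mem_closedBall, dist_eq_norm] at hx
  have htri : ‖x‖ ≤ ‖x - c‖ + ‖c‖ := by simpa using norm_add_le (x - c) c
  refine ⟨sameRay_iff_norm_add.mpr ?_, by linarith⟩
  rw [sub_add_cancel]
  linarith

lemma closedBall_eq_of_subset_of_mem_sphere {c x y : E} {ρ R : ℝ}
    (hsub : closedBall c ρ ⊆ closedBall 0 R) (hx : x ∈ closedBall c ρ) (hy : y ∈ closedBall c ρ)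
    (hxR : ‖x‖ = R) (hyR : ‖y‖ = R) (hxy : x ≠ y) : closedBall c ρ = closedBall 0 R := by
  obtain rfl : c = 0 := by
    by_contra hc
    obtain ⟨hxc, hxρ⟩ := sameRay_of_closedBall_subset hc hsub hx hxR
    obtain ⟨hyc, hyρ⟩ := sameRay_of_closedBall_subset hc hsub hy hyR
    have : x - c = y - c :=
      (hxc.trans hyc.symm fun h => absurd h hc).eq_of_norm_eq (hxρ.trans hyρ.symm)
    exact hxy (sub_left_injective this)
  refine hsub.antisymm (closedBall_subset_closedBall ?_)
  simpa [hxR] using hx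

end TouchingBalls

section ComplexLines

variable {V : Type*} [NormedAddCommGroup V] [InnerProductSpace ℂ V]

lemma IsComplexLine.exists_eq_range_of_inner_eq_zero {L : Set V} (hL : IsComplexLine L) :
    ∃ a b : V, b ≠ 0 ∧ inner ℂ b a = 0 ∧ L = range fun t : ℂ => a + t • b := by
  obtain ⟨a, b, hb, rfl⟩ := hL
  have hbb : inner ℂ b b ≠ (0 : ℂ) := inner_self_ne_zero.mpr hb
  set s : ℂ := inner ℂ b a / inner ℂ b b
  refine ⟨a - s • b, b, hb, ?_, ?_⟩
  · rw [inner_sub_right, inner_smul_right, div_mul_cancel₀ _ hbb, sub_self]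
  · ext z
    simp only [mem_ofPred_eq, mem_range]
    constructor
    · rintro ⟨t, rfl⟩
      exact ⟨t + s, by module⟩
    · rintro ⟨t, rfl⟩
      exact ⟨t - s, by module⟩

variable {a b : V}

lemma norm_add_smul_sq (hab : inner ℂ b a = 0) (t : ℂ) :
    ‖a + t • b‖ ^ 2 = ‖a‖ ^ 2 + ‖t‖ ^ 2 * ‖b‖ ^ 2 := by
  have h : inner ℂ a (t • b) = 0 := by rw [inner_smul_right, inner_eq_zero_symm.mpr hab, mul_zero]
  rw [@norm_add_sq ℂ, h, norm_smul, mul_pow]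
  simp

lemma norm_add_smul_le_norm_add_smul_iff (hb : b ≠ 0) (hab : inner ℂ b a = 0) {s t : ℂ} :
    ‖a + s • b‖ ≤ ‖a + t • b‖ ↔ ‖s‖ ≤ ‖t‖ := by
  have hb2 : 0 < ‖b‖ ^ 2 := by positivity
  rw [← sq_le_sq₀ (norm_nonneg _) (norm_nonneg _), norm_add_smul_sq hab, norm_add_smul_sq hab,
    add_le_add_iff_left, mul_le_mul_iff_of_pos_right hb2, sq_le_sq₀ (norm_nonneg _) (norm_nonneg _)]

lemma range_inter_closedBall_norm (hb : b ≠ 0) (hab : inner ℂ b a = 0) (t₀ : ℂ) :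
    (range fun t : ℂ => a + t • b) ∩ closedBall 0 ‖a + t₀ • b‖ =
      (fun t : ℂ => a + t • b) '' closedBall 0 ‖t₀‖ := by
  ext z
  simp only [mem_inter_iff, mem_range, mem_image, mem_closedBall, dist_zero_right]
  constructor
  · rintro ⟨⟨t, rfl⟩, ht⟩
    exact ⟨t, (norm_add_smul_le_norm_add_smul_iff hb hab).mp ht, rfl⟩
  · rintro ⟨t, ht, rfl⟩
    exact ⟨⟨t, rfl⟩, (norm_add_smul_le_norm_add_smul_iff hb hab).mpr ht⟩

end ComplexLines

lemma IsComplexDisk.exists_eq_image_closedBall {V : Type*} [AddCommGroup V] [Module ℂ V]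
    {S : Set V} {a b : V} (hS : IsComplexDisk S) (hSL : S ⊆ range fun t : ℂ => a + t • b) :
    ∃ (c : ℂ) (ρ : ℝ), S = (fun t : ℂ => a + t • b) '' closedBall c ρ := by
  obtain ⟨p, q, r, hr, -, rfl⟩ := hS
  obtain ⟨s₀, hs₀⟩ := hSL ⟨0, mem_closedBall_self hr.le, rfl⟩
  obtain ⟨s₁, hs₁⟩ := hSL ⟨r, by simp [abs_of_pos hr], rfl⟩
  simp only [zero_smul, add_zero] at hs₀ hs₁
  have hr0 : (r : ℂ) ≠ 0 := by exact_mod_cast hr.ne'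
  obtain ⟨k, hq⟩ : ∃ k : ℂ, q = k • b := by
    refine ⟨(s₁ - s₀) / r, ?_⟩
    have h : (r : ℂ) • q = (s₁ - s₀) • b := by
      rw [← hs₀] at hs₁
      linear_combination (norm := module) -hs₁
    rw [div_eq_inv_mul, mul_smul, ← h, inv_smul_smul₀ hr0]
  have hdisk : (fun t => s₀ + k * t) '' closedBall 0 r = closedBall s₀ (‖k‖ * r) := by
    rw [show (fun t => s₀ + k * t) = (s₀ +ᵥ ·) ∘ (k • ·) from rfl, image_comp, image_smul,
      image_vadd, _root_.smul_closedBall _ _ hr.le, vadd_closedBall, smul_zero, vadd_eq_add,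
      add_zero]
  refine ⟨s₀, ‖k‖ * r, ?_⟩
  rw [← hdisk, image_image, hq, ← hs₀]
  congr 1
  ext t
  module

theorem bombon_sphere_section_general (K : Set (EuclideanSpace ℂ (Fin 2)))
    (hKB : K ⊆ Metric.closedBall 0 1)
    (hsec : ∀ L : Set (EuclideanSpace ℂ (Fin 2)), IsComplexLine L →
      (L ∩ K = ∅ ∨ (∃ p, L ∩ K = {p}) ∨ IsComplexDisk (L ∩ K)))
    (x y : EuclideanSpace ℂ (Fin 2)) (hx : x ∈ K) (hy : y ∈ K) (hxy : x ≠ y)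
    (hxS : ‖x‖ = 1) (hyS : ‖y‖ = 1)
    (L : Set (EuclideanSpace ℂ (Fin 2))) (hL : IsComplexLine L)
    (hxL : x ∈ L) (hyL : y ∈ L) :
    L ∩ K = L ∩ Metric.closedBall 0 1 ∧
      L ∩ Metric.sphere 0 1 ⊆ K := by
  have hLK : (L ∩ K).Nontrivial := ⟨x, ⟨hxL, hx⟩, y, ⟨hyL, hy⟩, hxy⟩
  have hdisk : IsComplexDisk (L ∩ K) := by
    rcases hsec L hL with h | ⟨p, h⟩ | h
    exacts [absurd h hLK.nonempty.ne_empty, absurd h hLK.ne_singleton, h]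
  obtain ⟨a, b, hb, hab, rfl⟩ := hL.exists_eq_range_of_inner_eq_zero
  set g : ℂ → EuclideanSpace ℂ (Fin 2) := fun t => a + t • b
  have hg : Injective g := (add_right_injective a).comp (smul_left_injective ℂ hb)
  obtain ⟨c, ρ, hcρ⟩ := hdisk.exists_eq_image_closedBall inter_subset_left
  obtain ⟨tx, rfl⟩ := hxL
  obtain ⟨ty, rfl⟩ := hyL
  have hR : ‖ty‖ = ‖tx‖ := le_antisymm
    ((norm_add_smul_le_norm_add_smul_iff hb hab).mp (hyS.trans hxS.symm).le)
    ((norm_add_smul_le_norm_add_smul_iff hb hab).mp (hxS.trans hyS.symm).le)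
  have hball : range g ∩ closedBall 0 1 = g '' closedBall 0 ‖tx‖ :=
    hxS ▸ range_inter_closedBall_norm hb hab tx
  have hsub : closedBall c ρ ⊆ closedBall 0 ‖tx‖ := by
    rw [← image_subset_image_iff hg, ← hcρ, ← hball]
    exact inter_subset_inter_right _ hKB
  have hmem : ∀ t, g t ∈ K → t ∈ closedBall c ρ := fun t ht =>
    hg.mem_set_image.mp (hcρ ▸ ⟨mem_range_self t, ht⟩)
  have hsection : range g ∩ K = range g ∩ closedBall 0 1 := by
    rw [hcρ, hball, closedBall_eq_of_subset_of_mem_sphere hsub (hmem tx hx) (hmem ty hy) rfl hR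
      (ne_of_apply_ne g hxy)]
  refine ⟨hsection, fun z hz => ?_⟩
  have : z ∈ range g ∩ K := hsection ▸ ⟨hz.1, sphere_subset_closedBall hz.2⟩
  exact this.2

/-- If `K ⊂ ℂ²` is a convex body contained in the closed unit ball whose
complex line sections are empty, a point, or a disk, and `x ≠ y` are points of
`K` on the unit sphere, then for the complex line `L` through `x` and `y` one
has `L ∩ K = L ∩ B`, and in particular `L ∩ S³ ⊆ K`. -/
theorem bombon_sphere_section (K : Set (EuclideanSpace ℂ (Fin 2)))
    (hKc : IsCompact K) (hKconv : Convex ℝ K) (hKint : (interior K).Nonempty)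
    (hKB : K ⊆ Metric.closedBall 0 1)
    (hsec : ∀ L : Set (EuclideanSpace ℂ (Fin 2)), IsComplexLine L →
      (L ∩ K = ∅ ∨ (∃ p, L ∩ K = {p}) ∨ IsComplexDisk (L ∩ K)))
    (x y : EuclideanSpace ℂ (Fin 2)) (hx : x ∈ K) (hy : y ∈ K) (hxy : x ≠ y)
    (hxS : ‖x‖ = 1) (hyS : ‖y‖ = 1)
    (L : Set (EuclideanSpace ℂ (Fin 2))) (hL : IsComplexLine L)
    (hxL : x ∈ L) (hyL : y ∈ L) :
    L ∩ K = L ∩ Metric.closedBall 0 1 ∧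
      L ∩ Metric.sphere 0 1 ⊆ K :=
  bombon_sphere_section_general K hKB hsec x y hx hy hxy hxS hyS L hL hxL hyL
end

section
/- Let A ⊂ S³ be a proper, linearly closed subset of the unit sphere of ℂ² (for distinct x, y ∈ A, the complex-line circle through x and y is contained in A). Then A embeds topologically into ℂ: there is a continuous injective map from A to ℂ. (Explicitly, projection from any point w ∈ S³ \ A along complex lines into the orthogonal complex line is injective on A.) -/
open Metric

open scoped InnerProductSpace

section

variable {E : Type*} [NormedAddCommGroup E] [InnerProductSpace ℂ E]

def IsLinearlyClosed (A : Set E) : Prop :=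
  ∀ x ∈ A, ∀ y ∈ A, x ≠ y → ∀ L : Set E, IsComplexLine L → x ∈ L → y ∈ L → L ∩ sphere 0 1 ⊆ A

/-- The point where the complex line through `w` and `z` meets `(ℂ ∙ w)ᗮ`, for `‖w‖ = 1`. -/
noncomputable def projFrom (w z : E) : E :=
  (1 - ⟪w, z⟫_ℂ)⁻¹ • (z - ⟪w, z⟫_ℂ • w)

theorem projFrom_mem_orthogonal {w : E} (hw : ‖w‖ = 1) (z : E) :
    projFrom w z ∈ (ℂ ∙ w)ᗮ := by
  have hww : ⟪w, w⟫_ℂ = 1 := (inner_eq_one_iff_of_norm_eq_one hw hw).mpr rfl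
  rw [Submodule.mem_orthogonal_singleton_iff_inner_right, projFrom, inner_smul_right,
    inner_sub_right, inner_smul_right, hww, mul_one, sub_self, mul_zero]

theorem eq_add_smul_projFrom_sub {w z : E} (hz : ⟪w, z⟫_ℂ ≠ 1) :
    z = w + (1 - ⟪w, z⟫_ℂ) • (projFrom w z - w) := by
  have h : (1 - ⟪w, z⟫_ℂ) ≠ 0 := sub_ne_zero.mpr hz.symm
  rw [smul_sub, projFrom, smul_inv_smul₀ h]
  module

theorem inner_ne_one_of_mem_sphere {w z : E} (hw : ‖w‖ = 1) (hz : z ∈ sphere (0 : E) 1)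
    (hne : z ≠ w) : ⟪w, z⟫_ℂ ≠ 1 := fun h =>
  hne ((inner_eq_one_iff_of_norm_eq_one hw (by simpa using hz)).mp h).symm

theorem continuousOn_projFrom (w : E) : ContinuousOn (projFrom w) {z | ⟪w, z⟫_ℂ ≠ 1} := by
  refine ContinuousOn.smul (ContinuousOn.inv₀ (by fun_prop) fun z hz => ?_) (by fun_prop)
  exact sub_ne_zero.mpr (Ne.symm hz)

theorem projFrom_ne_self {w : E} (hw : ‖w‖ = 1) (z : E) : projFrom w z ≠ w := by
  intro h
  have := projFrom_mem_orthogonal hw z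
  rw [h, Submodule.mem_orthogonal_singleton_iff_inner_right, inner_self_eq_zero] at this
  simp [this] at hw

theorem mem_line_projFrom {w z : E} (hw : ‖w‖ = 1) (hz : z ∈ sphere (0 : E) 1) (hne : z ≠ w) :
    z ∈ {v | ∃ t : ℂ, v = w + t • (projFrom w z - w)} :=
  ⟨_, eq_add_smul_projFrom_sub (inner_ne_one_of_mem_sphere hw hz hne)⟩

theorem injOn_projFrom {A : Set E} {w : E} (hA : IsLinearlyClosed A) (hAS : A ⊆ sphere 0 1)
    (hw : ‖w‖ = 1) (hwA : w ∉ A) : Set.InjOn (projFrom w) A := by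
  intro x hx y hy hxy
  by_contra hne
  have hline : IsComplexLine {v | ∃ t : ℂ, v = w + t • (projFrom w x - w)} :=
    ⟨w, _, sub_ne_zero.mpr (projFrom_ne_self hw x), rfl⟩
  have hyL := mem_line_projFrom hw (hAS hy) (ne_of_mem_of_not_mem hy hwA)
  rw [← hxy] at hyL
  exact hwA (hA x hx y hy hne _ hline (mem_line_projFrom hw (hAS hx) (ne_of_mem_of_not_mem hx hwA))
    hyL ⟨⟨0, by simp⟩, by simpa using hw⟩)

theorem exists_continuous_injective_orthogonal {A : Set E} {w : E} (hA : IsLinearlyClosed A)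
    (hAS : A ⊆ sphere 0 1) (hw : ‖w‖ = 1) (hwA : w ∉ A) :
    ∃ f : A → (ℂ ∙ w)ᗮ, Continuous f ∧ Function.Injective f := by
  refine ⟨fun z => ⟨projFrom w z, projFrom_mem_orthogonal hw z⟩, ?_, fun x y hxy => ?_⟩
  · refine ((continuousOn_projFrom w).comp_continuous continuous_subtype_val
      fun z => ?_).subtype_mk _
    exact inner_ne_one_of_mem_sphere hw (hAS z.2) (ne_of_mem_of_not_mem z.2 hwA)
  · exact Subtype.ext (injOn_projFrom hA hAS hw hwA x.2 y.2 (congrArg Subtype.val hxy))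

theorem exists_continuous_injective_complex_of_finrank_eq_two (hE : Module.finrank ℂ E = 2)
    {A : Set E} (hA : IsLinearlyClosed A) (hAS : A ⊆ sphere 0 1) (hproper : A ≠ sphere 0 1) :
    ∃ f : A → ℂ, Continuous f ∧ Function.Injective f := by
  obtain ⟨w, hwS, hwA⟩ := Set.not_subset.mp fun h => hproper (hAS.antisymm h)
  have hw : ‖w‖ = 1 := by simpa using hwS
  obtain ⟨f, hf, hinj⟩ := exists_continuous_injective_orthogonal hA hAS hw hwA
  have : Fact (Module.finrank ℂ E = 1 + 1) := ⟨hE⟩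
  have hdim : Module.finrank ℂ (ℂ ∙ w)ᗮ = Module.finrank ℂ ℂ := by
    rw [Submodule.finrank_orthogonal_span_singleton (n := 1)
      (norm_ne_zero_iff.mp (hw ▸ one_ne_zero)), Module.finrank_self]
  have : FiniteDimensional ℂ E := .of_fact_finrank_eq_succ 1
  let e := ContinuousLinearEquiv.ofFinrankEq hdim
  exact ⟨e ∘ f, e.continuous.comp hf, e.injective.comp hinj⟩

end

/-- A proper linearly closed subset of `S³` embeds topologically in `ℂ`. -/
theorem linearly_closed_subset_embeds_in_C
    (A : Set (EuclideanSpace ℂ (Fin 2)))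
    (hAS : A ⊆ Metric.sphere 0 1)
    (hproper : A ≠ Metric.sphere 0 1)
    (hclosed : ∀ x ∈ A, ∀ y ∈ A, x ≠ y →
      ∀ L : Set (EuclideanSpace ℂ (Fin 2)), IsComplexLine L → x ∈ L → y ∈ L →
        L ∩ Metric.sphere 0 1 ⊆ A) :
    ∃ f : A → ℂ, Continuous f ∧ Function.Injective f :=
  exists_continuous_injective_complex_of_finrank_eq_two finrank_euclideanSpace_fin hclosed hAS
    hproper
end

section
/- Let K ⊂ ℂⁿ, n ≥ 3, be a complex body of revolution with axis L, hyperplane of revolution H = L^⊥, such that H ∩ K is the unit ball of H. Suppose Γ is a complex hyperplane (through the origin) containing L such that Γ ∩ K equals Γ ∩ B, where B is the unit ball of ℂⁿ. Then K = B. -/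
/-!
Write `x = v + y` with `v ∈ L` and `y ∈ Lᗮ`. The slice of `K` through `x` is a ball centred at
`v`, so `x ∈ K` iff `v + y' ∈ K` for every `y' ∈ Lᗮ` of norm `‖y‖`. Since `Γ ⊇ L` has larger
dimension, it contains a nonzero `w ⊥ L`, and `y'` may be taken as a multiple of `w`; then
`v + y' ∈ Γ`, where `K` agrees with the ball, and `‖v + y'‖ = ‖x‖` by Pythagoras.
-/

open Metric

section

variable {𝕜 E : Type*} [RCLike 𝕜] [NormedAddCommGroup E] [InnerProductSpace 𝕜 E]

def IsBodyOfRevolution (L : Submodule 𝕜 E) (K : Set E) : Prop :=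
  ∀ v : E, v ∈ L → (((fun x => x + v) '' (Lᗮ : Set E)) ∩ K).Nonempty →
    ∃ r : ℝ, 0 ≤ r ∧
      ((fun x => x + v) '' (Lᗮ : Set E)) ∩ K = {x ∈ (fun x => x + v) '' (Lᗮ : Set E) | ‖x - v‖ ≤ r}

theorem Submodule.norm_add_eq_of_mem_orthogonal {L : Submodule 𝕜 E} {v y y' : E} (hv : v ∈ L)
    (hy : y ∈ Lᗮ) (hy' : y' ∈ Lᗮ) (hyy' : ‖y‖ = ‖y'‖) : ‖v + y‖ = ‖v + y'‖ := by
  have h₁ := norm_add_sq_eq_norm_sq_add_norm_sq_of_inner_eq_zero (𝕜 := 𝕜) v y (hy v hv)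
  have h₂ := norm_add_sq_eq_norm_sq_add_norm_sq_of_inner_eq_zero (𝕜 := 𝕜) v y' (hy' v hv)
  rw [← mul_self_inj (norm_nonneg _) (norm_nonneg _), h₁, h₂, hyy']

theorem Submodule.exists_ne_zero_mem_orthogonal_inf {L Γ : Submodule 𝕜 E} [FiniteDimensional 𝕜 Γ]
    (hLΓ : L ≤ Γ) (hlt : Module.finrank 𝕜 L < Module.finrank 𝕜 Γ) : ∃ w ∈ Lᗮ ⊓ Γ, w ≠ 0 := by
  have : FiniteDimensional 𝕜 ↥(Lᗮ ⊓ Γ) := Submodule.finiteDimensional_of_le inf_le_right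
  rw [← Submodule.ne_bot_iff, Ne, ← Submodule.finrank_eq_zero (R := 𝕜)]
  have := Submodule.finrank_add_inf_finrank_orthogonal hLΓ
  omega

namespace IsBodyOfRevolution

variable {L : Submodule 𝕜 E} {K : Set E}

theorem add_mem_of_norm_le (hK : IsBodyOfRevolution L K) {v y y' : E} (hv : v ∈ L)
    (hy : y ∈ Lᗮ) (hy' : y' ∈ Lᗮ) (hyy' : ‖y'‖ ≤ ‖y‖) (hvy : v + y ∈ K) : v + y' ∈ K := by
  have mem_slice : ∀ z ∈ Lᗮ, v + z ∈ (fun x => x + v) '' (Lᗮ : Set E) :=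
    fun z hz => ⟨z, hz, add_comm z v⟩
  obtain ⟨r, -, hslice⟩ := hK v hv ⟨v + y, mem_slice y hy, hvy⟩
  have hyr : ‖y‖ ≤ r := by
    simpa using (hslice.subset ⟨mem_slice y hy, hvy⟩).2
  have : v + y' ∈ _ ∩ K := hslice.superset ⟨mem_slice y' hy', by simpa using hyy'.trans hyr⟩
  exact this.2

theorem add_mem_iff_of_norm_eq (hK : IsBodyOfRevolution L K) {v y y' : E} (hv : v ∈ L)
    (hy : y ∈ Lᗮ) (hy' : y' ∈ Lᗮ) (hyy' : ‖y‖ = ‖y'‖) : v + y ∈ K ↔ v + y' ∈ K :=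
  ⟨hK.add_mem_of_norm_le hv hy hy' hyy'.ge, hK.add_mem_of_norm_le hv hy' hy hyy'.le⟩

theorem eq_closedBall [L.HasOrthogonalProjection] (hK : IsBodyOfRevolution L K)
    {Γ : Submodule 𝕜 E} (hLΓ : L ≤ Γ) {w : E} (hw : w ∈ Lᗮ ⊓ Γ) (hw₀ : w ≠ 0) {R : ℝ}
    (hΓK : (Γ : Set E) ∩ K = (Γ : Set E) ∩ closedBall 0 R) : K = closedBall 0 R := by
  ext x
  set v := L.starProjection x
  have hv : v ∈ L := L.starProjection_apply_mem x
  have hy : x - v ∈ Lᗮ := L.sub_starProjection_mem_orthogonal x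
  set y' := ((‖x - v‖ : 𝕜) * (‖w‖ : 𝕜)⁻¹) • w
  have hy' : y' ∈ Lᗮ ⊓ Γ := Submodule.smul_mem _ _ hw
  have hnorm : ‖x - v‖ = ‖y'‖ := (norm_smul_inv_norm' (norm_nonneg _) hw₀).symm
  have hΓ : v + y' ∈ Γ := Γ.add_mem (hLΓ hv) hy'.2
  calc x ∈ K ↔ v + y' ∈ K := by
        conv_lhs => rw [← add_sub_cancel v x]
        exact hK.add_mem_iff_of_norm_eq hv hy hy'.1 hnorm
    _ ↔ v + y' ∈ closedBall 0 R := by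
        simpa [hΓ] using Set.ext_iff.mp hΓK (v + y')
    _ ↔ x ∈ closedBall 0 R := by
        rw [mem_closedBall_zero_iff, mem_closedBall_zero_iff,
          ← Submodule.norm_add_eq_of_mem_orthogonal hv hy hy'.1 hnorm, add_sub_cancel]

end IsBodyOfRevolution

end

theorem body_of_revolution_eq_ball_general (n : ℕ) (hn : 3 ≤ n)
    (K : Set (EuclideanSpace ℂ (Fin n)))
    (L : Submodule ℂ (EuclideanSpace ℂ (Fin n))) (hL : Module.finrank ℂ L = 1)
    (hrev : ∀ v : EuclideanSpace ℂ (Fin n), v ∈ L →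
      (((fun x => x + v) '' (Lᗮ : Set (EuclideanSpace ℂ (Fin n)))) ∩ K).Nonempty →
      ∃ r : ℝ, 0 ≤ r ∧
        ((fun x => x + v) '' (Lᗮ : Set (EuclideanSpace ℂ (Fin n)))) ∩ K =
          {x ∈ (fun x => x + v) '' (Lᗮ : Set (EuclideanSpace ℂ (Fin n))) | ‖x - v‖ ≤ r})
    (Γ : Submodule ℂ (EuclideanSpace ℂ (Fin n))) (hΓ : Module.finrank ℂ Γ = n - 1)
    (hLΓ : L ≤ Γ)
    (hΓK : (Γ : Set (EuclideanSpace ℂ (Fin n))) ∩ K =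
      (Γ : Set (EuclideanSpace ℂ (Fin n))) ∩ Metric.closedBall 0 1) :
    K = Metric.closedBall 0 1 := by
  obtain ⟨w, hw, hw₀⟩ :=
    Submodule.exists_ne_zero_mem_orthogonal_inf hLΓ (by rw [hL, hΓ]; omega)
  exact IsBodyOfRevolution.eq_closedBall hrev hLΓ hw hw₀ hΓK

/-- If `K ⊂ ℂⁿ` (`n ≥ 3`) is a complex body of revolution with axis the complex
line `L` and hyperplane of revolution `H = L^⊥`, whose section with `H` is the
unit ball of `H`, and some complex hyperplane `Γ ⊇ L` satisfies
`Γ ∩ K = Γ ∩ B`, then `K = B` (the unit ball of `ℂⁿ`). -/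
theorem body_of_revolution_eq_ball (n : ℕ) (hn : 3 ≤ n)
    (K : Set (EuclideanSpace ℂ (Fin n)))
    (hKc : IsCompact K) (hKconv : Convex ℝ K) (hKint : (interior K).Nonempty)
    (L : Submodule ℂ (EuclideanSpace ℂ (Fin n))) (hL : Module.finrank ℂ L = 1)
    (hrev : ∀ v : EuclideanSpace ℂ (Fin n), v ∈ L →
      (((fun x => x + v) '' (Lᗮ : Set (EuclideanSpace ℂ (Fin n)))) ∩ K).Nonempty →
      ∃ r : ℝ, 0 ≤ r ∧
        ((fun x => x + v) '' (Lᗮ : Set (EuclideanSpace ℂ (Fin n)))) ∩ K =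
          {x ∈ (fun x => x + v) '' (Lᗮ : Set (EuclideanSpace ℂ (Fin n))) | ‖x - v‖ ≤ r})
    (hH : (Lᗮ : Set (EuclideanSpace ℂ (Fin n))) ∩ K =
      (Lᗮ : Set (EuclideanSpace ℂ (Fin n))) ∩ Metric.closedBall 0 1)
    (Γ : Submodule ℂ (EuclideanSpace ℂ (Fin n))) (hΓ : Module.finrank ℂ Γ = n - 1)
    (hLΓ : L ≤ Γ)
    (hΓK : (Γ : Set (EuclideanSpace ℂ (Fin n))) ∩ K =
      (Γ : Set (EuclideanSpace ℂ (Fin n))) ∩ Metric.closedBall 0 1) :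
    K = Metric.closedBall 0 1 :=
  body_of_revolution_eq_ball_general n hn K L hL hrev Γ hΓ hLΓ hΓK
end
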